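/- Let A be a nonsingular M-tensor with diagonal part D and B = D − A ≥ 0, and let b ∈ R^n. Suppose x_0 ≥ 0 satisfies A x_0^{m-1} ≥ b, and let x ≥ 0 satisfy A x^{m-1} ≤ b with x ≤ x_0. Then the Jacobi sequence defined by D x_{k+1}^{m-1} = B x_k^{m-1} + b satisfies x ≤ x_{k+1} ≤ x_k for all k ≥ 0, hence converges to a limit x* with A (x*)^{m-1} = b and x* ≥ x. -/

import Mathlib

open Finset Filter

noncomputable section

/-- Action of an order-(p+1) tensor (p trailing indices):
`(A x^{p})_i = ∑ a_{i i₂ … i_{p+1}} x_{i₂} ⋯ x_{i_{p+1}}`. -/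
def tapp (p n : ℕ) (A : Fin n → (Fin p → Fin n) → ℝ) (x : Fin n → ℝ) : Fin n → ℝ :=
  fun i => ∑ js : Fin p → Fin n, A i js * ∏ j, x (js j)

/-- A `Z`-tensor: all off-diagonal entries are nonpositive. -/
def IsZTensor (p n : ℕ) (A : Fin n → (Fin p → Fin n) → ℝ) : Prop :=
  ∀ i js, (∃ j, js j ≠ i) → A i js ≤ 0

/-- The identity tensor. -/
def identT (p n : ℕ) : Fin n → (Fin p → Fin n) → ℝ :=
  fun i js => if ∀ j, js j = i then 1 else 0

/-- Spectral radius of a tensor: sup of moduli of (real) eigenvalues. -/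
def tensorSpecRad (p n : ℕ) (B : Fin n → (Fin p → Fin n) → ℝ) : ℝ :=
  sSup {r : ℝ | ∃ lam : ℝ, ∃ x : Fin n → ℝ, x ≠ 0 ∧
    (∀ i, tapp p n B x i = lam * x i ^ p) ∧ r = |lam|}

/-- A nonsingular M-tensor: `A = s I − B` with `B ≥ 0` and `s > ρ(B)`. -/
def IsMTensor (p n : ℕ) (A : Fin n → (Fin p → Fin n) → ℝ) : Prop :=
  ∃ s : ℝ, ∃ B : Fin n → (Fin p → Fin n) → ℝ,
    (∀ i js, 0 ≤ B i js) ∧ tensorSpecRad p n B < s ∧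
    ∀ i js, A i js = s * identT p n i js - B i js

/-- The diagonal-part tensor of `A`. -/
def diagT (p n : ℕ) (A : Fin n → (Fin p → Fin n) → ℝ) : Fin n → (Fin p → Fin n) → ℝ :=
  fun i js => if ∀ j, js j = i then A i (fun _ => i) else 0

/-- The majorization matrix of `A`: `M_{ij} = a_{i j … j}`. -/
def majMatrix (p n : ℕ) (A : Fin n → (Fin p → Fin n) → ℝ) : Matrix (Fin n) (Fin n) ℝ :=
  fun i j => A i (fun _ => j)

/-- The "mixed index" part `N = M_tensor − A`: zero on constant trailing tuples,
`−A` elsewhere. -/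
def NPart (p n : ℕ) (A : Fin n → (Fin p → Fin n) → ℝ) : Fin n → (Fin p → Fin n) → ℝ :=
  fun i js => if ∀ j' j'', js j' = js j'' then 0 else -A i js

/-- A nonsingular M-matrix: a Z-matrix with `M y > 0` for some `y > 0`. -/
def IsMMatrix (n : ℕ) (P : Matrix (Fin n) (Fin n) ℝ) : Prop :=
  (∀ i j, i ≠ j → P i j ≤ 0) ∧ ∃ y : Fin n → ℝ, (∀ i, 0 < y i) ∧ ∀ i, 0 < P.mulVec y i

/-- Spectral radius of a real matrix (via its complex spectrum). -/
def matSpecRad (n : ℕ) (J : Matrix (Fin n) (Fin n) ℝ) : ℝ :=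
  sSup {r : ℝ | ∃ μ ∈ spectrum ℂ (J.map (Complex.ofReal ·)), r = ‖μ‖}

/-- Irreducibility of a matrix. -/
def MatIrreducible (n : ℕ) (J : Matrix (Fin n) (Fin n) ℝ) : Prop :=
  ∀ S : Finset (Fin n), S.Nonempty → S ≠ Finset.univ → ∃ i ∈ S, ∃ j, j ∉ S ∧ J i j ≠ 0

/-!
Write `A = D - N` with `D` the diagonal part, so `N ≥ 0` (`A` is a Z-tensor). One Jacobi step
`D y^[m-1] = N v^{m-1} + b` from a supersolution `v` (`A v^{m-1} ≥ b`) gives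
`D y^[m-1] ≤ D v^[m-1]`, hence `y ≤ v`, and then `A y^{m-1} ≥ D y^[m-1] - N v^{m-1} = b`, so `y` is
again a supersolution; a subsolution `z ≤ v` stays below `y` by monotonicity of `N`. The iterates
therefore decrease, are bounded below by `z`, and their limit solves the equation by continuity.

Cancelling `D` needs `a_{i…i} > 0`, i.e. `b_{i…i} < s` when `A = sI - B`. This follows from
`s > ρ(B)` once every diagonal entry of a nonnegative tensor is bounded by one of its eigenvalues,
which is a weak form of the Perron–Frobenius theorem, proved through the Collatz–Wielandt minimum.
-/

open Topology

section TensorApplication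

variable {p n : ℕ}

lemma tapp_nonneg {B : Fin n → (Fin p → Fin n) → ℝ} (hB : ∀ i js, 0 ≤ B i js)
    {x : Fin n → ℝ} (hx : 0 ≤ x) (i : Fin n) : 0 ≤ tapp p n B x i :=
  sum_nonneg fun js _ => mul_nonneg (hB i js) (prod_nonneg fun _ _ => hx _)

lemma tapp_mono {B : Fin n → (Fin p → Fin n) → ℝ} (hB : ∀ i js, 0 ≤ B i js)
    {x y : Fin n → ℝ} (hx : 0 ≤ x) (hxy : x ≤ y) (i : Fin n) :
    tapp p n B x i ≤ tapp p n B y i :=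
  sum_le_sum fun js _ => mul_le_mul_of_nonneg_left
    (prod_le_prod (fun _ _ => hx _) fun _ _ => hxy _) (hB i js)

lemma mul_pow_le_tapp {B : Fin n → (Fin p → Fin n) → ℝ} (hB : ∀ i js, 0 ≤ B i js)
    {x : Fin n → ℝ} (hx : 0 ≤ x) (i j : Fin n) :
    B i (fun _ => j) * x j ^ p ≤ tapp p n B x i := by
  simpa [tapp, prod_const] using single_le_sum
    (f := fun js : Fin p → Fin n => B i js * ∏ k, x (js k))
    (fun js _ => mul_nonneg (hB i js) (prod_nonneg fun k _ => hx _)) (mem_univ fun _ => j)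

lemma tapp_lt_tapp {B : Fin n → (Fin p → Fin n) → ℝ} (hp : p ≠ 0) (hB : ∀ i js, 0 < B i js)
    {x y : Fin n → ℝ} (hx : 0 ≤ x) (hxy : x ≤ y) {j : Fin n} (hj : x j < y j) (i : Fin n) :
    tapp p n B x i < tapp p n B y i := by
  refine sum_lt_sum (fun js _ => mul_le_mul_of_nonneg_left
    (prod_le_prod (fun _ _ => hx _) fun _ _ => hxy _) (hB i js).le)
    ⟨fun _ => j, mem_univ _, mul_lt_mul_of_pos_left ?_ (hB i _)⟩
  simpa [prod_const] using pow_lt_pow_left₀ hj (hx j) hp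

lemma tapp_sub (C A : Fin n → (Fin p → Fin n) → ℝ) (x : Fin n → ℝ) (i : Fin n) :
    tapp p n (fun i js => C i js - A i js) x i = tapp p n C x i - tapp p n A x i := by
  simp only [tapp, sub_mul, sum_sub_distrib]

lemma tapp_diagT (A : Fin n → (Fin p → Fin n) → ℝ) (x : Fin n → ℝ) (i : Fin n) :
    tapp p n (diagT p n A) x i = A i (fun _ => i) * x i ^ p := by
  rw [tapp, sum_eq_single (fun _ => i)]
  · simp [diagT, prod_const]
  · intro js _ hne
    rw [diagT, if_neg fun h => hne (funext h), zero_mul]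
  · exact fun h => absurd (mem_univ _) h

lemma sum_prod_comp_eq_pow (x : Fin n → ℝ) :
    ∑ js : Fin p → Fin n, ∏ j, x (js j) = (∑ k, x k) ^ p := by
  rw [← Fintype.prod_sum (fun (_ : Fin p) k => x k), prod_const, card_univ, Fintype.card_fin]

lemma tapp_add_const (B : Fin n → (Fin p → Fin n) → ℝ) (c : ℝ) (x : Fin n → ℝ) (i : Fin n) :
    tapp p n (fun i js => B i js + c) x i = tapp p n B x i + c * (∑ k, x k) ^ p := by
  simp only [tapp, add_mul, sum_add_distrib, ← mul_sum, sum_prod_comp_eq_pow]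

lemma tapp_smul (B : Fin n → (Fin p → Fin n) → ℝ) (c : ℝ) (x : Fin n → ℝ) (i : Fin n) :
    tapp p n B (c • x) i = c ^ p * tapp p n B x i := by
  simp only [tapp, mul_sum, Pi.smul_apply, smul_eq_mul, prod_mul_distrib, prod_const,
    card_univ, Fintype.card_fin]
  exact sum_congr rfl fun js _ => by ring

@[fun_prop]
lemma continuous_tapp (B : Fin n → (Fin p → Fin n) → ℝ) : Continuous (tapp p n B) := by
  unfold tapp
  fun_prop

lemma abs_le_sum_of_tapp_eq {B : Fin n → (Fin p → Fin n) → ℝ} (hB : ∀ i js, 0 ≤ B i js)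
    {lam : ℝ} {x : Fin n → ℝ} (hx : x ≠ 0) (heig : ∀ i, tapp p n B x i = lam * x i ^ p) :
    |lam| ≤ ∑ i, ∑ js, B i js := by
  obtain ⟨j, hj⟩ := Function.ne_iff.mp hx
  obtain ⟨i, -, hmax⟩ := exists_max_image univ (fun i => |x i|) ⟨j, mem_univ _⟩
  have hxi : 0 < |x i| := (abs_pos.mpr hj).trans_le (hmax j (mem_univ _))
  have hrow : |lam| * |x i| ^ p ≤ (∑ js, B i js) * |x i| ^ p := by
    rw [← abs_pow, ← abs_mul, ← heig i, tapp, sum_mul]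
    refine (abs_sum_le_sum_abs _ _).trans (sum_le_sum fun js _ => ?_)
    rw [abs_mul, abs_of_nonneg (hB i js), abs_prod]
    refine mul_le_mul_of_nonneg_left ?_ (hB i js)
    simpa [prod_const] using prod_le_prod (s := univ) (fun k _ => abs_nonneg (x (js k)))
      fun k _ => hmax (js k) (mem_univ _)
  calc |lam| ≤ ∑ js, B i js := le_of_mul_le_mul_right hrow (pow_pos hxi p)
    _ ≤ ∑ i, ∑ js, B i js :=
      single_le_sum (fun i _ => sum_nonneg fun js _ => hB i js) (mem_univ i)

end TensorApplication

section PerronFrobenius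

variable {p n : ℕ} {B : Fin n → (Fin p → Fin n) → ℝ}

lemma exists_pos_of_mem_stdSimplex {x : Fin n → ℝ} (hx : x ∈ stdSimplex ℝ (Fin n)) :
    ∃ i, 0 < x i := by
  by_contra! h
  have := sum_nonpos fun i (_ : i ∈ univ) => h i
  linarith [hx.2]

lemma ne_zero_of_mem_stdSimplex {x : Fin n → ℝ} (hx : x ∈ stdSimplex ℝ (Fin n)) : x ≠ 0 :=
  fun h => by simpa [h] using hx.2

lemma nonneg_of_tapp_le (hB : ∀ i js, 0 ≤ B i js) {lam : ℝ} {x : Fin n → ℝ}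
    (hx : x ∈ stdSimplex ℝ (Fin n)) (hle : ∀ i, tapp p n B x i ≤ lam * x i ^ p) : 0 ≤ lam := by
  obtain ⟨i, hi⟩ := exists_pos_of_mem_stdSimplex hx
  exact nonneg_of_mul_nonneg_left ((tapp_nonneg hB hx.1 i).trans (hle i)) (pow_pos hi p)

lemma exists_mem_stdSimplex_tapp_le {lam : ℝ} {y : Fin n → ℝ} (hy : 0 ≤ y)
    (hsum : 0 < ∑ i, y i) (hle : ∀ i, tapp p n B y i ≤ lam * y i ^ p) :
    ∃ x ∈ stdSimplex ℝ (Fin n), ∀ i, tapp p n B x i ≤ lam * x i ^ p := by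
  refine ⟨(∑ i, y i)⁻¹ • y, ⟨fun i => mul_nonneg (inv_nonneg.2 hsum.le) (hy i), ?_⟩, fun i => ?_⟩
  · simp only [Pi.smul_apply, smul_eq_mul, ← mul_sum, inv_mul_cancel₀ hsum.ne']
  · rw [tapp_smul, Pi.smul_apply, smul_eq_mul, mul_pow, mul_left_comm]
    exact mul_le_mul_of_nonneg_left (hle i) (by positivity)

lemma exists_isLeast_collatzWielandt (hn : 0 < n) (hB : ∀ i js, 0 ≤ B i js) :
    ∃ lam₀, ∃ x ∈ stdSimplex ℝ (Fin n), (∀ i, tapp p n B x i ≤ lam₀ * x i ^ p) ∧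
      ∀ lam, ∀ y ∈ stdSimplex ℝ (Fin n), (∀ i, tapp p n B y i ≤ lam * y i ^ p) → lam₀ ≤ lam := by
  set T : Set (ℝ × (Fin n → ℝ)) :=
    {q | q.2 ∈ stdSimplex ℝ (Fin n) ∧ ∀ i, tapp p n B q.2 i ≤ q.1 * q.2 i ^ p}
  have hT : IsClosed T := by
    have h := isClosed_iInter fun i : Fin n =>
      isClosed_le (f := fun q : ℝ × (Fin n → ℝ) => tapp p n B q.2 i)
        (g := fun q => q.1 * q.2 i ^ p) (by fun_prop) (by fun_prop)
    rw [← Set.ofPred_forall] at h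
    exact ((isClosed_stdSimplex ℝ (Fin n)).preimage continuous_snd).inter h
  set u : Fin n → ℝ := fun _ => (n : ℝ)⁻¹
  have hu : u ∈ stdSimplex ℝ (Fin n) :=
    ⟨fun _ => by positivity, by simp [u, hn.ne']⟩
  have hupow : 0 < (n : ℝ)⁻¹ ^ p := by positivity
  obtain ⟨lam₁, hlam₁⟩ : ∃ lam₁, ∀ i, tapp p n B u i ≤ lam₁ * u i ^ p :=
    (eventually_all.2 fun i => (tendsto_id.atTop_mul_const hupow).eventually_ge_atTop
      (tapp p n B u i)).exists
  have hK : IsCompact (T ∩ Set.Icc 0 lam₁ ×ˢ stdSimplex ℝ (Fin n)) :=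
    (isCompact_Icc.prod (isCompact_stdSimplex ℝ (Fin n))).inter_left hT
  have hu₁ : (lam₁, u) ∈ T ∩ Set.Icc 0 lam₁ ×ˢ stdSimplex ℝ (Fin n) :=
    ⟨⟨hu, hlam₁⟩, ⟨nonneg_of_tapp_le hB hu hlam₁, le_rfl⟩, hu⟩
  obtain ⟨⟨lam₀, x⟩, ⟨⟨hx, hxle⟩, -⟩, hmin⟩ :=
    hK.exists_isMinOn ⟨_, hu₁⟩ continuous_fst.continuousOn
  refine ⟨lam₀, x, hx, hxle, fun lam y hy hyle => ?_⟩
  rcases le_or_gt lam lam₁ with h | h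
  · exact hmin (a := (lam, y)) ⟨⟨hy, hyle⟩, ⟨nonneg_of_tapp_le hB hy hyle, h⟩, hy⟩
  · exact le_trans (b := lam₁) (hmin hu₁) h.le

lemma exists_lt_forall_tapp_le {lam : ℝ} {y : Fin n → ℝ}
    (hlt : ∀ i, tapp p n B y i < lam * y i ^ p) :
    ∃ lam' < lam, ∀ i, tapp p n B y i ≤ lam' * y i ^ p := by
  have h : ∀ᶠ μ in 𝓝 lam, ∀ i, tapp p n B y i < μ * y i ^ p :=
    eventually_all.2 fun i => continuousAt_const.eventually_lt (by fun_prop) (hlt i)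
  obtain ⟨μ, hμ, hμlt⟩ :=
    ((h.filter_mono (nhdsWithin_le_nhds (s := Set.Iio lam))).and self_mem_nhdsWithin).exists
  exact ⟨μ, hμlt, fun i => (hμ i).le⟩

/-- Shrinking `x` slightly at `i₁` keeps the inequality at `i₁` strict and, the entries of `B`
being positive, makes all the others strict. -/
lemma exists_forall_tapp_lt (hp : p ≠ 0) (hB : ∀ i js, 0 < B i js) {lam : ℝ}
    {x : Fin n → ℝ} (hx : ∀ i, 0 < x i) (hle : ∀ i, tapp p n B x i ≤ lam * x i ^ p)
    {i₁ : Fin n} (hlt : tapp p n B x i₁ < lam * x i₁ ^ p) :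
    ∃ y : Fin n → ℝ, (∀ i, 0 < y i) ∧ ∀ i, tapp p n B y i < lam * y i ^ p := by
  have hcont : Continuous fun t => tapp p n B (Function.update x i₁ t) i₁ :=
    (continuous_apply i₁).comp
      ((continuous_tapp B).comp (continuous_const.update i₁ continuous_id))
  have hnear : ∀ᶠ t in 𝓝 (x i₁), tapp p n B (Function.update x i₁ t) i₁ < lam * t ^ p :=
    hcont.continuousAt.eventually_lt (g := fun t => lam * t ^ p) (by fun_prop)
      (by simpa using hlt)
  obtain ⟨t, ht, ht0, htx⟩ :=
    ((hnear.filter_mono nhdsWithin_le_nhds).and (Ioo_mem_nhdsLT (hx i₁))).exists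
  set y := Function.update x i₁ t
  have hyx : y ≤ x := fun i => by
    rcases eq_or_ne i i₁ with rfl | hi
    · simpa [y] using htx.le
    · simp [y, hi]
  refine ⟨y, fun i => ?_, fun i => ?_⟩
  · rcases eq_or_ne i i₁ with rfl | hi
    · simpa [y] using ht0
    · simpa [y, hi] using hx i
  · rcases eq_or_ne i i₁ with rfl | hi
    · simpa [y] using ht
    · have hy0 : 0 ≤ y := fun j => by
        rcases eq_or_ne j i₁ with rfl | hj
        · simpa [y] using ht0.le
        · simpa [y, hj] using (hx j).le
      calc tapp p n B y i < tapp p n B x i :=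
            tapp_lt_tapp hp hB hy0 hyx (j := i₁) (by simpa [y] using htx) i
        _ ≤ lam * x i ^ p := hle i
        _ = lam * y i ^ p := by simp [y, hi]

/-- The Collatz–Wielandt minimiser is an eigenvector: otherwise `exists_forall_tapp_lt` and
`exists_lt_forall_tapp_le` would undercut the minimum. -/
theorem exists_pos_eigenvector_of_pos (hp : p ≠ 0) (hn : 0 < n) (hB : ∀ i js, 0 < B i js) :
    ∃ lam, ∃ x ∈ stdSimplex ℝ (Fin n), (∀ i, 0 < x i) ∧ ∀ i, tapp p n B x i = lam * x i ^ p := by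
  obtain ⟨lam₀, x, hx, hle, hmin⟩ := exists_isLeast_collatzWielandt hn fun i js => (hB i js).le
  have hpos : ∀ i, 0 < x i := by
    obtain ⟨j, hj⟩ := exists_pos_of_mem_stdSimplex hx
    refine fun i => (hx.1 i).lt_of_ne' fun hi => ?_
    have h := (mul_pow_le_tapp (fun i js => (hB i js).le) hx.1 i j).trans (hle i)
    rw [hi, zero_pow hp, mul_zero] at h
    exact h.not_gt (mul_pos (hB i _) (pow_pos hj p))
  refine ⟨lam₀, x, hx, hpos, fun i => (hle i).eq_of_not_lt fun hlt => ?_⟩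
  obtain ⟨y, hy, hylt⟩ := exists_forall_tapp_lt hp hB hpos hle hlt
  obtain ⟨lam', hlam', hyle⟩ := exists_lt_forall_tapp_le hylt
  obtain ⟨w, hw, hwle⟩ := exists_mem_stdSimplex_tapp_le (fun i => (hy i).le)
    (sum_pos (fun i _ => hy i) (univ_nonempty_iff.2 ⟨⟨0, hn⟩⟩)) hyle
  exact (hmin lam' w hw hwle).not_gt hlam'

/-- Pass to the limit in the positive tensors `B + 1/(k+1)`, whose eigenvalues dominate the
diagonal because their eigenvectors are positive. -/
theorem exists_eigenvector_diag_le (hp : p ≠ 0) (hn : 0 < n) (hB : ∀ i js, 0 ≤ B i js) :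
    ∃ lam, ∃ x ∈ stdSimplex ℝ (Fin n), (∀ i, tapp p n B x i = lam * x i ^ p) ∧
      ∀ i, B i (fun _ => i) ≤ lam := by
  set ε : ℕ → ℝ := fun k => 1 / ((k : ℝ) + 1)
  have hε : ∀ k, 0 < ε k := fun k => by positivity
  choose lam x hx hxpos heig using fun k => exists_pos_eigenvector_of_pos hp hn
    (B := fun i js => B i js + ε k) fun i js => add_pos_of_nonneg_of_pos (hB i js) (hε k)
  have hdiag : ∀ k i, B i (fun _ => i) ≤ lam k := fun k i => by
    have h := (mul_pow_le_tapp (fun i js => (hB i js).trans (le_add_of_nonneg_right (hε k).le))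
      (fun j => (hxpos k j).le) i i).trans_eq (heig k i)
    linarith [le_of_mul_le_mul_right h (pow_pos (hxpos k i) p), hε k]
  set M := ∑ i, ∑ js, (B i js + 1)
  have hbound : ∀ k, |lam k| ≤ M := fun k =>
    (abs_le_sum_of_tapp_eq (fun i js => (hB i js).trans (le_add_of_nonneg_right (hε k).le))
      (ne_zero_of_mem_stdSimplex (hx k)) (heig k)).trans
    (sum_le_sum fun i _ => sum_le_sum fun js _ => by
      have : ε k ≤ 1 := div_le_one_of_le₀ (by simp) (by positivity)
      linarith)
  obtain ⟨⟨μ, ξ⟩, ⟨-, hξ⟩, φ, hφ, hlim⟩ :=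
    (isCompact_Icc.prod (isCompact_stdSimplex ℝ (Fin n))).tendsto_subseq
      (x := fun k => (lam k, x k)) fun k => ⟨abs_le.1 (hbound k), hx k⟩
  refine ⟨μ, ξ, hξ, fun i => ?_, fun i => ge_of_tendsto'
    ((continuous_fst.tendsto _).comp hlim) fun k => hdiag (φ k) i⟩
  have hF : Tendsto (fun k => lam (φ k) * x (φ k) i ^ p - tapp p n B (x (φ k)) i) atTop
      (𝓝 (μ * ξ i ^ p - tapp p n B ξ i)) :=
    ((show Continuous fun q : ℝ × (Fin n → ℝ) => q.1 * q.2 i ^ p - tapp p n B q.2 i by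
      fun_prop).tendsto _).comp hlim
  have hε' : Tendsto (fun k => lam (φ k) * x (φ k) i ^ p - tapp p n B (x (φ k)) i) atTop
      (𝓝 0) := by
    refine (tendsto_one_div_add_atTop_nhds_zero_nat.comp hφ.tendsto_atTop).congr fun k => ?_
    rw [← heig, tapp_add_const, (hx (φ k)).2]
    simp [ε]
  linarith [tendsto_nhds_unique hF hε']

lemma abs_le_tensorSpecRad (hB : ∀ i js, 0 ≤ B i js) {lam : ℝ} {x : Fin n → ℝ} (hx : x ≠ 0)
    (heig : ∀ i, tapp p n B x i = lam * x i ^ p) : |lam| ≤ tensorSpecRad p n B :=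
  le_csSup ⟨∑ i, ∑ js, B i js, by
    rintro r ⟨lam, x, hx, heig, rfl⟩
    exact abs_le_sum_of_tapp_eq hB hx heig⟩ ⟨lam, x, hx, heig, rfl⟩

lemma diag_le_tensorSpecRad (hp : p ≠ 0) (hB : ∀ i js, 0 ≤ B i js) (i : Fin n) :
    B i (fun _ => i) ≤ tensorSpecRad p n B := by
  obtain ⟨lam, x, hx, heig, hdiag⟩ := exists_eigenvector_diag_le hp i.pos hB
  exact (hdiag i).trans
    ((le_abs_self lam).trans (abs_le_tensorSpecRad hB (ne_zero_of_mem_stdSimplex hx) heig))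

end PerronFrobenius

section MTensor

variable {p n : ℕ} {A : Fin n → (Fin p → Fin n) → ℝ}

lemma IsMTensor.diag_pos (hp : p ≠ 0) (hA : IsMTensor p n A) (i : Fin n) :
    0 < A i (fun _ => i) := by
  obtain ⟨s, B, hB, hρ, hAB⟩ := hA
  rw [hAB, identT, if_pos fun _ => rfl, mul_one, sub_pos]
  exact (diag_le_tensorSpecRad hp hB i).trans_lt hρ

lemma IsMTensor.isZTensor (hA : IsMTensor p n A) : IsZTensor p n A := by
  obtain ⟨s, B, hB, -, hAB⟩ := hA
  rintro i js ⟨j, hj⟩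
  rw [hAB, identT, if_neg fun h => hj (h j), mul_zero, zero_sub, neg_nonpos]
  exact hB i js

lemma IsZTensor.diagT_sub_nonneg (hA : IsZTensor p n A) (i : Fin n) (js : Fin p → Fin n) :
    0 ≤ diagT p n A i js - A i js := by
  by_cases h : ∀ j, js j = i
  · obtain rfl : js = fun _ => i := funext h
    simp [diagT]
  · rw [diagT, if_neg h, zero_sub, neg_nonneg]
    exact hA i js (not_forall.1 h)

end MTensor

/-- `D y^[p] = (D - A) v^p + b`, with `D` the diagonal part of `A`. -/
def IsJacobiStep (p n : ℕ) (A : Fin n → (Fin p → Fin n) → ℝ) (b v y : Fin n → ℝ) : Prop :=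
  ∀ i, A i (fun _ => i) * y i ^ p = tapp p n (fun i js => diagT p n A i js - A i js) v i + b i

section JacobiStep

variable {p n : ℕ} {A : Fin n → (Fin p → Fin n) → ℝ} {b v y : Fin n → ℝ}

lemma tapp_eq_diag_sub (A : Fin n → (Fin p → Fin n) → ℝ) (x : Fin n → ℝ) (i : Fin n) :
    tapp p n A x i = A i (fun _ => i) * x i ^ p
      - tapp p n (fun i js => diagT p n A i js - A i js) x i := by
  rw [tapp_sub, tapp_diagT]
  ring

lemma jacobiStep_le (hp : p ≠ 0) (hD : ∀ i, 0 < A i (fun _ => i))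
    (hstep : IsJacobiStep p n A b v y)
    (hy : 0 ≤ y) (hv : 0 ≤ v) (hb : b ≤ tapp p n A v) : y ≤ v := fun i =>
  (pow_le_pow_iff_left₀ (hy i) (hv i) hp).1 <| le_of_mul_le_mul_left
    (by linarith [hstep i, hb i, tapp_eq_diag_sub A v i]) (hD i)

lemma le_jacobiStep (hp : p ≠ 0) (hD : ∀ i, 0 < A i (fun _ => i)) (hA : IsZTensor p n A)
    (hstep : IsJacobiStep p n A b v y)
    (hy : 0 ≤ y) {z : Fin n → ℝ} (hz : 0 ≤ z) (hzv : z ≤ v) (hzb : tapp p n A z ≤ b) :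
    z ≤ y := fun i =>
  (pow_le_pow_iff_left₀ (hz i) (hy i) hp).1 <| le_of_mul_le_mul_left
    (by linarith [hstep i, hzb i, tapp_eq_diag_sub A z i,
      tapp_mono hA.diagT_sub_nonneg hz hzv i]) (hD i)

lemma le_tapp_jacobiStep (hA : IsZTensor p n A)
    (hstep : IsJacobiStep p n A b v y)
    (hy : 0 ≤ y) (hyv : y ≤ v) : b ≤ tapp p n A y := fun i => by
  linarith [hstep i, tapp_eq_diag_sub A y i, tapp_mono hA.diagT_sub_nonneg hy hyv i]

lemma tapp_eq_of_tendsto_jacobi {x : ℕ → Fin n → ℝ} {xs : Fin n → ℝ}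
    (hiter : ∀ k, IsJacobiStep p n A b (x k) (x (k + 1))) (hlim : Tendsto x atTop (𝓝 xs)) :
    tapp p n A xs = b := by
  funext i
  have hlhs : Tendsto (fun k => A i (fun _ => i) * x (k + 1) i ^ p) atTop
      (𝓝 (A i (fun _ => i) * xs i ^ p)) :=
    (((tendsto_pi_nhds.1 hlim i).comp (tendsto_add_atTop_nat 1)).pow p).const_mul _
  have hrhs : Tendsto (fun k => tapp p n (fun i js => diagT p n A i js - A i js) (x k) i + b i)
      atTop (𝓝 (tapp p n (fun i js => diagT p n A i js - A i js) xs i + b i)) :=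
    (tendsto_pi_nhds.1 (((continuous_tapp _).tendsto xs).comp hlim) i).add_const (b i)
  have h := tendsto_nhds_unique (hlhs.congr (hiter · i)) hrhs
  rw [tapp_eq_diag_sub A xs i]
  linarith

end JacobiStep

theorem stmt6_general (m n : ℕ) (hm : 2 ≤ m) (A : Fin n → (Fin (m-1) → Fin n) → ℝ)
    (hA : IsMTensor (m-1) n A) (b : Fin n → ℝ)
    (x0 z : Fin n → ℝ) (hAx0 : b ≤ tapp (m-1) n A x0)
    (hz : 0 ≤ z) (hzb : tapp (m-1) n A z ≤ b) (hzx0 : z ≤ x0)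
    (x : ℕ → Fin n → ℝ) (hinit : x 0 = x0) (hxpos : ∀ k, 0 ≤ x (k+1))
    (hiter : ∀ k i, A i (fun _ => i) * (x (k+1) i) ^ (m-1) =
      tapp (m-1) n (fun i js => diagT (m-1) n A i js - A i js) (x k) i + b i) :
    (∀ k, z ≤ x k ∧ x (k+1) ≤ x k) ∧
    ∃ xs : Fin n → ℝ, Filter.Tendsto x Filter.atTop (nhds xs) ∧
      tapp (m-1) n A xs = b ∧ z ≤ xs := by
  have hp : m - 1 ≠ 0 := by omega
  have hD := hA.diag_pos hp
  have hZ := hA.isZTensor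
  have hinv : ∀ k, z ≤ x k ∧ b ≤ tapp (m-1) n A (x k) := by
    intro k
    induction k with
    | zero => exact hinit ▸ ⟨hzx0, hAx0⟩
    | succ k ih =>
      have hdec := jacobiStep_le hp hD (hiter k) (hxpos k) (hz.trans ih.1) ih.2
      exact ⟨le_jacobiStep hp hD hZ (hiter k) (hxpos k) hz ih.1 hzb,
        le_tapp_jacobiStep hZ (hiter k) (hxpos k) hdec⟩
  have hdec : ∀ k, x (k+1) ≤ x k := fun k =>
    jacobiStep_le hp hD (hiter k) (hxpos k) (hz.trans (hinv k).1) (hinv k).2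
  have hlim := tendsto_atTop_ciInf (antitone_nat_of_succ_le hdec)
    ⟨z, Set.forall_mem_range.2 fun k => (hinv k).1⟩
  exact ⟨fun k => ⟨(hinv k).1, hdec k⟩, _, hlim, tapp_eq_of_tendsto_jacobi hiter hlim,
    le_ciInf fun k => (hinv k).1⟩

/-- the Jacobi iteration started at `x₀` with `A x₀^{m-1} ≥ b` is
squeezed between any `z ∈ S_l` with `z ≤ x₀` and the previous iterate, decreases
monotonically, and converges to a solution `x* ≥ z`. -/
theorem stmt6 (m n : ℕ) (hm : 2 ≤ m) (A : Fin n → (Fin (m-1) → Fin n) → ℝ)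
    (hA : IsMTensor (m-1) n A) (b : Fin n → ℝ)
    (x0 z : Fin n → ℝ) (hx0 : 0 ≤ x0) (hAx0 : b ≤ tapp (m-1) n A x0)
    (hz : 0 ≤ z) (hzb : tapp (m-1) n A z ≤ b) (hzx0 : z ≤ x0)
    (x : ℕ → Fin n → ℝ) (hinit : x 0 = x0) (hxpos : ∀ k, 0 ≤ x (k+1))
    (hiter : ∀ k i, A i (fun _ => i) * (x (k+1) i) ^ (m-1) =
      tapp (m-1) n (fun i js => diagT (m-1) n A i js - A i js) (x k) i + b i) :
    (∀ k, z ≤ x k ∧ x (k+1) ≤ x k) ∧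
    ∃ xs : Fin n → ℝ, Filter.Tendsto x Filter.atTop (nhds xs) ∧
      tapp (m-1) n A xs = b ∧ z ≤ xs :=
  stmt6_general m n hm A hA b x0 z hAx0 hz hzb hzx0 x hinit hxpos hiter

end
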